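/- Let X and Y be Banach spaces, 1 < p < ∞, x ∈ X \ {0}, y ∈ Y \ {0}. If (x, y) is a semi PC point of B_{X ⊕_p Y}, then x/‖x‖ is a semi PC point of B_X and y/‖y‖ is a semi PC point of B_Y. -/

import Mathlib

/-!
Near a point `z₀ = (x₀, y₀)` of the unit ball of `X ⊕_p Y`, the map `u ↦ (‖x₀‖ u, y₀)` is weakly
continuous, sends `B_X` into `B_{X ⊕_p Y}` (the `p`-norm is monotone in each coordinate) and hits
`z₀` at `x₀ / ‖x₀‖`. Pulling back a small relatively weakly open set around `(x, y)` along it gives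
a nonempty relatively weakly open subset of `B_X` on which `‖x₀‖ u` is close to `x`, so `u` is close
to `x / ‖x‖`. The second factor follows by swapping the factors.
-/

/-- The weak topology on a normed space `Z`. -/
noncomputable def weakTop (Z : Type*) [NormedAddCommGroup Z] [NormedSpace ℝ Z] :
    TopologicalSpace Z :=
  TopologicalSpace.induced (fun (z : Z) (f : Z →L[ℝ] ℝ) => f z) inferInstance

/-- A point `x₀` of the closed unit ball of `Z` is a *semi PC* of `B_Z` if for every `ε > 0`
there is a nonempty relatively weakly open subset of `B_Z` contained in `B(x₀, ε)`. -/
def IsSemiPCOfBall {Z : Type*} [NormedAddCommGroup Z] [NormedSpace ℝ Z] (x : Z) : Prop :=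
  ‖x‖ ≤ 1 ∧ ∀ ε > (0 : ℝ), ∃ U : Set Z, (weakTop Z).IsOpen U ∧
    (U ∩ {z : Z | ‖z‖ ≤ 1}).Nonempty ∧ U ∩ {z : Z | ‖z‖ ≤ 1} ⊆ Metric.closedBall x ε

open Topology WithLp

section WeakTopology

variable {E F : Type*} [NormedAddCommGroup E] [NormedSpace ℝ E]
  [NormedAddCommGroup F] [NormedSpace ℝ F]

theorem continuous_weakTop (A : E →L[ℝ] F) : Continuous[weakTop E, weakTop F] A :=
  (WeakSpace.map A).continuous

theorem continuous_weakTop_add_const (A : E →L[ℝ] F) (c : F) :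
    Continuous[weakTop E, weakTop F] fun u => A u + c :=
  show Continuous fun u : WeakSpace ℝ E => WeakSpace.map A u + toWeakSpace ℝ F c from
    (WeakSpace.map A).continuous.add continuous_const

theorem IsSemiPCOfBall.of_pullback {z : F} (hz : IsSemiPCOfBall z) {a : E}
    (ha : ‖a‖ ≤ 1)
    (H : ∀ ε > 0, ∃ δ > 0, ∀ z₀ : F, ‖z₀‖ ≤ 1 → dist z₀ z ≤ δ →
      ∃ T : E → F, Continuous[weakTop E, weakTop F] T ∧ (∃ u₀, ‖u₀‖ ≤ 1 ∧ T u₀ = z₀) ∧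
        ∀ u, ‖u‖ ≤ 1 → ‖T u‖ ≤ 1 ∧ (dist (T u) z ≤ δ → dist u a ≤ ε)) :
    IsSemiPCOfBall a := by
  refine ⟨ha, fun ε hε => ?_⟩
  obtain ⟨δ, hδ, hT⟩ := H ε hε
  obtain ⟨W, hW, ⟨z₀, hz₀W, hz₀⟩, hWz⟩ := hz.2 δ hδ
  obtain ⟨T, hTc, ⟨u₀, hu₀, rfl⟩, hTu⟩ := hT z₀ hz₀ (hWz ⟨hz₀W, hz₀⟩)
  refine ⟨T ⁻¹' W, @Continuous.isOpen_preimage _ _ (weakTop E) (weakTop F) T hTc W hW,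
    ⟨u₀, hz₀W, hu₀⟩, fun u ⟨huW, hu⟩ => ?_⟩
  exact (hTu u hu).2 (hWz ⟨huW, (hTu u hu).1⟩)

theorem IsSemiPCOfBall.map_linearIsometryEquiv (e : E ≃ₗᵢ[ℝ] F) {z : E}
    (h : IsSemiPCOfBall z) : IsSemiPCOfBall (e z) := by
  refine h.of_pullback (by simpa using h.1) fun ε hε =>
    ⟨ε, hε, fun z₀ hz₀ _ => ⟨e.symm, ?_, ⟨e z₀, by simpa using hz₀, by simp⟩, fun u hu =>
      ⟨by simpa using hu, fun hd => by rwa [← e.symm.dist_map, e.symm_apply_apply]⟩⟩⟩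
  exact continuous_weakTop (e.symm : F →L[ℝ] E)

end WeakTopology

theorem mul_norm_sub_le_of_norm_eq_one {E : Type*} [NormedAddCommGroup E] [NormedSpace ℝ E]
    {a : E} (ha : ‖a‖ = 1) (u : E) {r : ℝ} (hr : 0 ≤ r) (t : ℝ) :
    r * ‖u - a‖ ≤ ‖r • u - t • a‖ + |t - r| :=
  calc r * ‖u - a‖ = ‖(r • u - t • a) + (t - r) • a‖ := by
        rw [← norm_smul_of_nonneg hr]; congr 1; module
    _ ≤ ‖r • u - t • a‖ + |t - r| := by
        simpa [norm_smul, ha] using norm_add_le (r • u - t • a) ((t - r) • a)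

namespace WithLp

variable {p : ENNReal} [Fact (1 ≤ p)] {X Y : Type*}

theorem prod_norm_toLp_le_of_norm_fst_le [SeminormedAddCommGroup X] [SeminormedAddCommGroup Y]
    {a a' : X} (b : Y) (h : ‖a‖ ≤ ‖a'‖) : ‖toLp p (a, b)‖ ≤ ‖toLp p (a', b)‖ := by
  rcases p.dichotomy with rfl | hp
  · rw [prod_norm_eq_sup, prod_norm_eq_sup]
    exact max_le_max h le_rfl
  · rw [prod_norm_eq_add (by linarith), prod_norm_eq_add (by linarith)]
    gcongr
    exacts [h, le_rfl]

variable [NormedAddCommGroup X] [NormedSpace ℝ X] [NormedAddCommGroup Y] [NormedSpace ℝ Y]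

theorem continuous_weakTop_toLp_smul_const (r : ℝ) (b : Y) :
    Continuous[weakTop X, weakTop (WithLp p (X × Y))] fun u => toLp p (r • u, b) := by
  convert continuous_weakTop_add_const
    (r • ((prodContinuousLinearEquiv p ℝ X Y).symm : X × Y →L[ℝ] WithLp p (X × Y)).comp
      (ContinuousLinearMap.inl ℝ X Y)) (toLp p (0, b)) using 2 with u
  rw [WithLp.ext_iff]
  ext <;> simp

end WithLp

theorem IsSemiPCOfBall.inv_norm_smul_fst {p : ENNReal} [Fact (1 ≤ p)] {X Y : Type*}
    [NormedAddCommGroup X] [NormedSpace ℝ X] [NormedAddCommGroup Y] [NormedSpace ℝ Y]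
    {x : X} {y : Y} (hx : x ≠ 0) (h : IsSemiPCOfBall (toLp p (x, y))) :
    IsSemiPCOfBall (‖x‖⁻¹ • x) := by
  have hx' : 0 < ‖x‖ := norm_pos_iff.2 hx
  have ha : ‖‖x‖⁻¹ • x‖ = 1 := norm_smul_inv_norm hx
  refine h.of_pullback ha.le fun ε hε => ?_
  set δ := min (‖x‖ / 2) (ε * ‖x‖ / 4)
  have hδx : δ ≤ ‖x‖ / 2 := min_le_left _ _
  have hδε : δ ≤ ε * ‖x‖ / 4 := min_le_right _ _
  refine ⟨δ, by positivity, fun z₀ hz₀ hz₀z => ?_⟩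
  set r := ‖z₀.fst‖
  have hrx : |‖x‖ - r| ≤ δ :=
    (abs_norm_sub_norm_le x z₀.fst).trans <| by
      rw [← dist_eq_norm, dist_comm]; exact (dist_fst_le z₀ _).trans hz₀z
  have hr : ‖x‖ / 2 ≤ r := by linarith [abs_le.1 hrx]
  have hr₀ : r ≠ 0 := (half_pos hx').trans_le hr |>.ne'
  refine ⟨fun u => toLp p (r • u, z₀.snd), continuous_weakTop_toLp_smul_const r _,
    ⟨r⁻¹ • z₀.fst, (norm_smul_inv_norm (norm_ne_zero_iff.1 hr₀)).le, ?_⟩,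
    fun u hu => ⟨?_, fun hu' => ?_⟩⟩
  · simp only [smul_inv_smul₀ hr₀]
    rfl
  · refine (prod_norm_toLp_le_of_norm_fst_le _ ?_).trans hz₀
    rw [norm_smul_of_nonneg (norm_nonneg _)]
    exact mul_le_of_le_one_right (norm_nonneg _) hu
  · have hru : ‖r • u - x‖ ≤ δ := by
      rw [← dist_eq_norm]; exact (dist_fst_le _ (toLp p (x, y))).trans hu'
    have key := mul_norm_sub_le_of_norm_eq_one ha u (norm_nonneg z₀.fst) ‖x‖
    rw [smul_inv_smul₀ hx'.ne'] at key
    rw [dist_eq_norm]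
    refine le_of_mul_le_mul_left ?_ (by positivity : 0 < r)
    calc r * ‖u - ‖x‖⁻¹ • x‖ ≤ ‖r • u - x‖ + |‖x‖ - r| := key
      _ ≤ ‖x‖ / 2 * ε := by linarith
      _ ≤ r * ε := by gcongr

theorem isSemiPCOfBall_of_prod_general
    {X Y : Type*} [NormedAddCommGroup X] [NormedSpace ℝ X]
    [NormedAddCommGroup Y] [NormedSpace ℝ Y]
    (p : ENNReal) [Fact (1 ≤ p)]
    (x : X) (y : Y) (hx : x ≠ 0) (hy : y ≠ 0)
    (h : IsSemiPCOfBall ((WithLp.equiv p (X × Y)).symm (x, y))) :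
    IsSemiPCOfBall (‖x‖⁻¹ • x) ∧ IsSemiPCOfBall (‖y‖⁻¹ • y) :=
  ⟨h.inv_norm_smul_fst hx,
    (h.map_linearIsometryEquiv (LinearIsometryEquiv.withLpProdComm p ℝ X Y)).inv_norm_smul_fst hy⟩

/-- For Banach spaces `X`, `Y`, `1 < p < ∞`, `x ≠ 0`, `y ≠ 0`: if `(x, y)` is a semi PC point
of `B_{X ⊕_p Y}`, then `x/‖x‖` is a semi PC point of `B_X` and `y/‖y‖` is a semi PC point of
`B_Y`. -/
theorem isSemiPCOfBall_of_prod
    {X Y : Type*} [NormedAddCommGroup X] [NormedSpace ℝ X] [CompleteSpace X]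
    [NormedAddCommGroup Y] [NormedSpace ℝ Y] [CompleteSpace Y]
    (p : ENNReal) [Fact (1 ≤ p)] (hp1 : 1 < p) (hp : p ≠ ⊤)
    (x : X) (y : Y) (hx : x ≠ 0) (hy : y ≠ 0)
    (h : IsSemiPCOfBall ((WithLp.equiv p (X × Y)).symm (x, y))) :
    IsSemiPCOfBall (‖x‖⁻¹ • x) ∧ IsSemiPCOfBall (‖y‖⁻¹ • y) :=
  isSemiPCOfBall_of_prod_general p x y hx hy h
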